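/- For i ∈ {1,2}, let lp_i be a coherent conditional lower prevision on C_i ⊆ C(X_i) with natural extension E_i to C(X_i), and let 𝔅_i ⊆ P_∅(X_i). Then for every gamble f on X1 and every gamble h on X2 (External additivity): (lp1⊗lp2)(f + h) = E_1(f) + E_2(h), where f + h denotes the gamble (x1,x2) ↦ f(x1) + h(x2), E_i(·) := E_i(·|X_i), and (lp1⊗lp2)(·) abbreviates (lp1⊗lp2)(·|X1×X2). -/

import Mathlib

open scoped BigOperators

namespace IPaper

variable {X : Type*}

/-- A gamble on `X`: a bounded real-valued function. -/
def IsGamble (f : X → ℝ) : Prop := ∃ M : ℝ, ∀ x, |f x| ≤ M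

/-- The indicator gamble of an event. -/
noncomputable def ind (B : Set X) : X → ℝ := Set.indicator B 1

/-- The set `G_{>0}(X)` of nonnegative nonzero gambles. -/
def Gpos (X : Type*) : Set (X → ℝ) := {f | IsGamble f ∧ 0 ≤ f ∧ f ≠ 0}

/-- A coherent set of desirable gambles. -/
structure CoherentSDG (D : Set (X → ℝ)) : Prop where
  subset_gambles : ∀ f ∈ D, IsGamble f
  d1 : ∀ f : X → ℝ, IsGamble f → 0 ≤ f → f ≠ 0 → f ∈ D
  d2 : ∀ f ∈ D, ∀ l : ℝ, 0 < l → l • f ∈ D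
  d3 : ∀ f ∈ D, ∀ g ∈ D, f + g ∈ D
  d4 : ∀ f : X → ℝ, f ≤ 0 → f ∉ D

/-- `posi A`: positive linear hull of `A`. -/
def posi (A : Set (X → ℝ)) : Set (X → ℝ) :=
  {g | ∃ (n : ℕ) (l : Fin (n + 1) → ℝ) (h : Fin (n + 1) → X → ℝ),
    (∀ i, 0 < l i) ∧ (∀ i, h i ∈ A) ∧ g = ∑ i, l i • h i}

/-- `E(A) := posi (A ∪ G_{>0}(X))`. -/
def natExtSet (A : Set (X → ℝ)) : Set (X → ℝ) := posi (A ∪ Gpos X)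

/-- `C(X)`: all pairs of a gamble and a nonempty event. -/
def domC (X : Type*) : Set ((X → ℝ) × Set X) := {p | IsGamble p.1 ∧ p.2.Nonempty}

/-- The conditional lower prevision `lp_D` derived from a set of gambles `D`. -/
noncomputable def lpOf (D : Set (X → ℝ)) (f : X → ℝ) (B : Set X) : EReal :=
  sSup (Real.toEReal '' {m : ℝ | (fun x => (f x - m) * ind B x) ∈ D})

/-- Coherence (Williams) of a conditional lower prevision on a domain `C`. -/
def Coherent (C : Set ((X → ℝ) × Set X)) (lp : (X → ℝ) → Set X → EReal) : Prop :=
  ∃ D : Set (X → ℝ), CoherentSDG D ∧ ∀ p ∈ C, lp p.1 p.2 = lpOf D p.1 p.2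

/-- The set `A_lp`. -/
def Alp (C : Set ((X → ℝ) × Set X)) (lp : (X → ℝ) → Set X → EReal) : Set (X → ℝ) :=
  {g | ∃ p ∈ C, ∃ m : ℝ, (m : EReal) < lp p.1 p.2 ∧ g = fun x => (p.1 x - m) * ind p.2 x}

/-- `E(lp) := E(A_lp)`. -/
def ElpSet (C : Set ((X → ℝ) × Set X)) (lp : (X → ℝ) → Set X → EReal) : Set (X → ℝ) :=
  natExtSet (Alp C lp)

/-- The natural extension of `lp` to all of `C(X)`. -/
noncomputable def natExtLP (C : Set ((X → ℝ) × Set X)) (lp : (X → ℝ) → Set X → EReal)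
    (f : X → ℝ) (B : Set X) : EReal :=
  lpOf (ElpSet C lp) f B

/-- Simple `B`-measurable gamble. -/
def SimpleMeas (Bfam : Set (Set X)) (g : X → ℝ) : Prop :=
  ∃ (c0 : ℝ) (n : ℕ) (c : Fin n → ℝ) (Bs : Fin n → Set X),
    0 ≤ c0 ∧ (∀ i, 0 ≤ c i) ∧ (∀ i, Bs i ∈ Bfam) ∧
    g = fun x => c0 + ∑ i, c i * ind (Bs i) x

/-- `B`-measurable gamble: uniform limit of nonnegative simple `B`-measurable gambles. -/
def BMeas (Bfam : Set (Set X)) (g : X → ℝ) : Prop :=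
  ∃ gs : ℕ → X → ℝ, (∀ n, 0 ≤ gs n ∧ SimpleMeas Bfam (gs n)) ∧
    TendstoUniformly gs g Filter.atTop

/-- A conditional linear prevision on `C(X)`: a coherent self-conjugate conditional
lower prevision on the full domain. -/
def CondLinPrev (P : (X → ℝ) → Set X → EReal) : Prop :=
  Coherent (domC X) P ∧ ∀ p ∈ domC X, P p.1 p.2 = -P (-p.1) p.2

section Product

variable {X1 X2 : Type*}

/-- `A_{1→2}`. -/
def A12 (D2 : Set (X2 → ℝ)) (F1 : Set (Set X1)) : Set (X1 × X2 → ℝ) :=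
  {g | ∃ f2 ∈ D2, ∃ B1 ∈ F1 ∪ {Set.univ}, g = fun p => f2 p.2 * ind B1 p.1}

/-- `A_{2→1}`. -/
def A21 (D1 : Set (X1 → ℝ)) (F2 : Set (Set X2)) : Set (X1 × X2 → ℝ) :=
  {g | ∃ f1 ∈ D1, ∃ B2 ∈ F2 ∪ {Set.univ}, g = fun p => f1 p.1 * ind B2 p.2}

/-- `D1 ⊗ D2`, relative to the families of conditioning events `F1`, `F2`. -/
def indNatExt (D1 : Set (X1 → ℝ)) (D2 : Set (X2 → ℝ))
    (F1 : Set (Set X1)) (F2 : Set (Set X2)) : Set (X1 × X2 → ℝ) :=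
  natExtSet (A12 D2 F1 ∪ A21 D1 F2)

/-- `marg_1(D)`. -/
def marg1 (D : Set (X1 × X2 → ℝ)) : Set (X1 → ℝ) :=
  {f | IsGamble f ∧ (fun p : X1 × X2 => f p.1) ∈ D}

/-- `marg_2(D)`. -/
def marg2 (D : Set (X1 × X2 → ℝ)) : Set (X2 → ℝ) :=
  {f | IsGamble f ∧ (fun p : X1 × X2 => f p.2) ∈ D}

/-- `marg_1(D|B2)`. -/
def marg1c (D : Set (X1 × X2 → ℝ)) (B2 : Set X2) : Set (X1 → ℝ) :=
  {f | IsGamble f ∧ (fun p : X1 × X2 => f p.1 * ind B2 p.2) ∈ D}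

/-- `marg_2(D|B1)`. -/
def marg2c (D : Set (X1 × X2 → ℝ)) (B1 : Set X1) : Set (X2 → ℝ) :=
  {f | IsGamble f ∧ (fun p : X1 × X2 => f p.2 * ind B1 p.1) ∈ D}

/-- Epistemic independence of a set of desirable gambles on `X1 × X2`. -/
def EpIndSDG (F1 : Set (Set X1)) (F2 : Set (Set X2)) (D : Set (X1 × X2 → ℝ)) : Prop :=
  (∀ B2 ∈ F2, marg1c D B2 = marg1 D) ∧ (∀ B1 ∈ F1, marg2c D B1 = marg2 D)

/-- Independent product (of sets of desirable gambles). -/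
def IndProductSDG (F1 : Set (Set X1)) (F2 : Set (Set X2))
    (D1 : Set (X1 → ℝ)) (D2 : Set (X2 → ℝ)) (D : Set (X1 × X2 → ℝ)) : Prop :=
  CoherentSDG D ∧ EpIndSDG F1 F2 D ∧ marg1 D = D1 ∧ marg2 D = D2

/-- The independent natural extension `lp1 ⊗ lp2` on `C(X1 × X2)`. -/
noncomputable def lpProd (C1 : Set ((X1 → ℝ) × Set X1)) (lp1 : (X1 → ℝ) → Set X1 → EReal)
    (C2 : Set ((X2 → ℝ) × Set X2)) (lp2 : (X2 → ℝ) → Set X2 → EReal)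
    (F1 : Set (Set X1)) (F2 : Set (Set X2)) :
    (X1 × X2 → ℝ) → Set (X1 × X2) → EReal :=
  lpOf (indNatExt (ElpSet C1 lp1) (ElpSet C2 lp2) F1 F2)

/-- An independent domain `C ⊆ C(X1 × X2)`. -/
def IndepDomain (F1 : Set (Set X1)) (F2 : Set (Set X2))
    (C : Set ((X1 × X2 → ℝ) × Set (X1 × X2))) : Prop :=
  (∀ (f1 : X1 → ℝ) (B1 : Set X1), IsGamble f1 → B1.Nonempty → ∀ B2 ∈ F2,
    (((fun p : X1 × X2 => f1 p.1), B1 ×ˢ (Set.univ : Set X2)) ∈ C ↔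
      ((fun p : X1 × X2 => f1 p.1), B1 ×ˢ B2) ∈ C)) ∧
  (∀ (f2 : X2 → ℝ) (B2 : Set X2), IsGamble f2 → B2.Nonempty → ∀ B1 ∈ F1,
    (((fun p : X1 × X2 => f2 p.2), (Set.univ : Set X1) ×ˢ B2) ∈ C ↔
      ((fun p : X1 × X2 => f2 p.2), B1 ×ˢ B2) ∈ C))

/-- Epistemic independence of a conditional lower prevision on a domain `C`. -/
def EpIndLP (F1 : Set (Set X1)) (F2 : Set (Set X2))
    (C : Set ((X1 × X2 → ℝ) × Set (X1 × X2)))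
    (lp : (X1 × X2 → ℝ) → Set (X1 × X2) → EReal) : Prop :=
  (∀ (f1 : X1 → ℝ) (B1 : Set X1), IsGamble f1 → B1.Nonempty →
    ((fun p : X1 × X2 => f1 p.1), B1 ×ˢ (Set.univ : Set X2)) ∈ C → ∀ B2 ∈ F2,
    lp (fun p : X1 × X2 => f1 p.1) (B1 ×ˢ (Set.univ : Set X2)) =
      lp (fun p : X1 × X2 => f1 p.1) (B1 ×ˢ B2)) ∧
  (∀ (f2 : X2 → ℝ) (B2 : Set X2), IsGamble f2 → B2.Nonempty →
    ((fun p : X1 × X2 => f2 p.2), (Set.univ : Set X1) ×ˢ B2) ∈ C → ∀ B1 ∈ F1,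
    lp (fun p : X1 × X2 => f2 p.2) ((Set.univ : Set X1) ×ˢ B2) =
      lp (fun p : X1 × X2 => f2 p.2) (B1 ×ˢ B2))

/-- Independent product of two conditional lower previsions, on the joint domain `C`. -/
def IndProductLP (F1 : Set (Set X1)) (F2 : Set (Set X2))
    (C1 : Set ((X1 → ℝ) × Set X1)) (lp1 : (X1 → ℝ) → Set X1 → EReal)
    (C2 : Set ((X2 → ℝ) × Set X2)) (lp2 : (X2 → ℝ) → Set X2 → EReal)
    (C : Set ((X1 × X2 → ℝ) × Set (X1 × X2)))
    (lp : (X1 × X2 → ℝ) → Set (X1 × X2) → EReal) : Prop :=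
  Coherent C lp ∧ EpIndLP F1 F2 C lp ∧
  (∀ p ∈ C1, lp (fun q : X1 × X2 => p.1 q.1) (p.2 ×ˢ (Set.univ : Set X2)) = lp1 p.1 p.2) ∧
  (∀ p ∈ C2, lp (fun q : X1 × X2 => p.1 q.2) ((Set.univ : Set X1) ×ˢ p.2) = lp2 p.1 p.2)

end Product

/-! Write `D₁ = E(lp1)` and `D₂ = E(lp2)`, so that `E_i(g) = sup {m | g - m ∈ D_i}`.
If `f - m₁ ∈ D₁` and `h - m₂ ∈ D₂`, their cylindrical extensions lie in `A_{2→1}` and `A_{1→2}`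
and add up to `f + h - (m₁ + m₂)`; this gives `≥`.

For `≤`, the Riesz extension theorem gives a linear functional `P`, nonnegative on `D₂`, with
`P 1 = 1` and `P h ≤ E₂(h)`. Applying `P` in the second coordinate sends each generator of
`D₁ ⊗ D₂`, hence each of its elements, into `D₁ ∪ {0}`. So if `f + h - m ∈ D₁ ⊗ D₂`, then
`f - (m - P h) ∈ D₁ ∪ {0}`, whence `m ≤ E₁(f) + P h ≤ E₁(f) + E₂(h)`. -/

def gambles (X : Type*) : Submodule ℝ (X → ℝ) where
  carrier := {f | IsGamble f}
  add_mem' := by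
    rintro f g ⟨M, hM⟩ ⟨N, hN⟩
    exact ⟨M + N, fun x => (abs_add_le _ _).trans (add_le_add (hM x) (hN x))⟩
  zero_mem' := ⟨0, fun _ => by simp⟩
  smul_mem' := by
    rintro c f ⟨M, hM⟩
    exact ⟨|c| * M, fun x => by
      rw [Pi.smul_apply, smul_eq_mul, abs_mul]
      exact mul_le_mul_of_nonneg_left (hM x) (abs_nonneg c)⟩

namespace IsGamble

variable {f g : X → ℝ}

lemma add (hf : IsGamble f) (hg : IsGamble g) : IsGamble (f + g) := (gambles X).add_mem hf hg

lemma sub (hf : IsGamble f) (hg : IsGamble g) : IsGamble (f - g) := (gambles X).sub_mem hf hg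

lemma const_smul (hf : IsGamble f) (c : ℝ) : IsGamble (c • f) := (gambles X).smul_mem c hf

lemma const (c : ℝ) : IsGamble (fun _ : X => c) := ⟨|c|, fun _ => le_rfl⟩

lemma ind (B : Set X) : IsGamble (ind B) :=
  ⟨1, fun x => by by_cases hx : x ∈ B <;> simp [IPaper.ind, hx]⟩

end IsGamble

lemma ind_nonneg (B : Set X) : 0 ≤ ind B := Set.indicator_nonneg fun _ _ => zero_le_one

lemma posi_subset {A S : Set (X → ℝ)} (hAS : A ⊆ S)
    (hsmul : ∀ g ∈ S, ∀ c : ℝ, 0 < c → c • g ∈ S)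
    (hadd : ∀ g ∈ S, ∀ g' ∈ S, g + g' ∈ S) : posi A ⊆ S := by
  rintro g ⟨n, l, k, hl, hk, rfl⟩
  induction n with
  | zero => simpa using hsmul _ (hAS (hk 0)) _ (hl 0)
  | succ n ih =>
    rw [Fin.sum_univ_castSucc]
    exact hadd _ (ih (fun i => l i.castSucc) (fun i => k i.castSucc) (fun _ => hl _)
      (fun _ => hk _)) _ (hsmul _ (hAS (hk _)) _ (hl _))

lemma subset_posi (A : Set (X → ℝ)) : A ⊆ posi A :=
  fun g hg => ⟨0, fun _ => 1, fun _ => g, fun _ => one_pos, fun _ => hg, by simp⟩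

lemma smul_mem_posi {A : Set (X → ℝ)} {g : X → ℝ} (hg : g ∈ posi A) {c : ℝ} (hc : 0 < c) :
    c • g ∈ posi A := by
  obtain ⟨n, l, k, hl, hk, rfl⟩ := hg
  exact ⟨n, fun i => c * l i, k, fun i => mul_pos hc (hl i), hk, by
    simp [Finset.smul_sum, smul_smul]⟩

lemma add_smul_mem_posi {A : Set (X → ℝ)} {g k : X → ℝ} (hg : g ∈ posi A) {c : ℝ}
    (hc : 0 < c) (hk : k ∈ A) : g + c • k ∈ posi A := by
  obtain ⟨n, l, p, hl, hp, rfl⟩ := hg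
  refine ⟨n + 1, Fin.snoc l c, Fin.snoc p k, fun i => ?_, fun i => ?_, ?_⟩
  · induction i using Fin.lastCases <;> simp [hc, hl]
  · induction i using Fin.lastCases <;> simp [hk, hp]
  · simp [Fin.sum_univ_castSucc]

lemma add_mem_posi {A : Set (X → ℝ)} {g g' : X → ℝ} (hg : g ∈ posi A) (hg' : g' ∈ posi A) :
    g + g' ∈ posi A := by
  obtain ⟨n, l, p, hl, hp, rfl⟩ := hg'
  induction n with
  | zero => simpa using add_smul_mem_posi hg (hl 0) (hp 0)
  | succ n ih =>
    rw [Fin.sum_univ_castSucc, ← add_assoc]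
    exact add_smul_mem_posi (ih (fun i => l i.castSucc) (fun i => p i.castSucc)
      (fun _ => hl _) (fun _ => hp _)) (hl _) (hp _)

namespace CoherentSDG

variable {D : Set (X → ℝ)} {g g' : X → ℝ} {P : (X → ℝ) →ₗ[ℝ] ℝ}

def cone (hD : CoherentSDG D) : PointedCone ℝ (X → ℝ) where
  carrier := insert 0 D
  zero_mem' := Set.mem_insert _ _
  add_mem' := by
    rintro f f' (rfl | hf) (rfl | hf')
    exacts [.inl (zero_add _), .inr (by simpa using hf'), .inr (by simpa using hf),
      .inr (hD.d3 f hf f' hf')]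
  smul_mem' := by
    rintro ⟨c, hc⟩ f (rfl | hf)
    · exact .inl (smul_zero _)
    · rcases hc.eq_or_lt with rfl | hc
      · exact .inl (zero_smul ℝ f)
      · exact .inr (hD.d2 f hf c hc)

lemma subset_cone (hD : CoherentSDG D) : D ⊆ hD.cone := fun _ => .inr

lemma mem_cone_of_nonneg (hD : CoherentSDG D) (hg : IsGamble g) (h0 : 0 ≤ g) : g ∈ hD.cone := by
  by_cases hg0 : g = 0
  exacts [.inl hg0, .inr (hD.d1 g hg h0 hg0)]

lemma mem_of_pos [Nonempty X] (hD : CoherentSDG D) (hg : IsGamble g) (hpos : ∀ x, 0 < g x) :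
    g ∈ D :=
  hD.d1 g hg (fun x => (hpos x).le) fun h0 => (hpos (Classical.arbitrary X)).ne' (congrFun h0 _)

lemma add_mem_of_mem_cone (hD : CoherentSDG D) (hg : g ∈ D) (hg' : g' ∈ hD.cone) :
    g + g' ∈ D := by
  rcases hg' with rfl | hg'
  exacts [by simpa using hg, hD.d3 g hg g' hg']

lemma natExtSet_subset {A : Set (X → ℝ)} (hD : CoherentSDG D) (hA : A ⊆ D) :
    natExtSet A ⊆ D :=
  posi_subset (Set.union_subset hA fun g hg => hD.d1 g hg.1 hg.2.1 hg.2.2)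
    (fun g hg c hc => hD.d2 g hg c hc) fun g hg g' hg' => hD.d3 g hg g' hg'

lemma apply_nonneg_of_mem_cone (hD : CoherentSDG D) (hP : ∀ f ∈ D, 0 ≤ P f) {f : X → ℝ}
    (hf : f ∈ hD.cone) : 0 ≤ P f := by
  rcases hf with rfl | hf
  exacts [(map_zero P).ge, hP f hf]

lemma abs_apply_le (hD : CoherentSDG D) (hP : ∀ f ∈ D, 0 ≤ P f) (hP1 : P 1 = 1) {f : X → ℝ}
    {M : ℝ} (hM : ∀ x, |f x| ≤ M) : |P f| ≤ M := by
  have hM1 : IsGamble (M • (1 : X → ℝ)) := (IsGamble.const 1).const_smul M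
  have hle := hD.apply_nonneg_of_mem_cone hP (hD.mem_cone_of_nonneg (hM1.sub ⟨M, hM⟩)
    fun x => by simpa using (abs_le.1 (hM x)).2)
  have hge := hD.apply_nonneg_of_mem_cone hP (hD.mem_cone_of_nonneg (hM1.add ⟨M, hM⟩)
    fun x => by simpa [← sub_nonneg, sub_neg_eq_add, add_comm] using (abs_le.1 (hM x)).1)
  simp only [map_sub, map_add, map_smul, hP1, smul_eq_mul, mul_one] at hle hge
  exact abs_le.2 ⟨by linarith, by linarith⟩

lemma const_smul_one_nonneg [Nonempty X] (hD : CoherentSDG D) {c : ℝ}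
    (hc : c • (1 : X → ℝ) ∈ hD.cone) : 0 ≤ c := by
  by_contra! hneg
  rcases hc with h0 | hc
  · simpa [hneg.ne] using congrFun h0 (Classical.arbitrary X)
  · exact hD.d4 _ (fun _ => by simpa using hneg.le) hc

def gambleConeAdjoin (hD : CoherentSDG D) (w : X → ℝ) : PointedCone ℝ (gambles X) where
  carrier := {v | ∃ t : ℝ, 0 ≤ t ∧ (v : X → ℝ) - t • w ∈ hD.cone}
  zero_mem' := ⟨0, le_rfl, by simp⟩
  add_mem' := by
    rintro v v' ⟨t, ht, hv⟩ ⟨t', ht', hv'⟩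
    refine ⟨t + t', add_nonneg ht ht', ?_⟩
    convert hD.cone.add_mem hv hv' using 1
    simp only [Submodule.coe_add, add_smul]
    abel
  smul_mem' := by
    rintro ⟨c, hc⟩ v ⟨t, ht, hv⟩
    refine ⟨c * t, mul_nonneg hc ht, ?_⟩
    convert hD.cone.smul_mem hc hv using 1
    simp [smul_sub, smul_smul]

end CoherentSDG

lemma coherentSDG_natExtSet {D A : Set (X → ℝ)} (hD : CoherentSDG D) (hA : A ⊆ D) :
    CoherentSDG (natExtSet A) where
  subset_gambles g hg := hD.subset_gambles g (hD.natExtSet_subset hA hg)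
  d1 _ hg h0 hne := subset_posi _ (.inr ⟨hg, h0, hne⟩)
  d2 _ hg _ hc := smul_mem_posi hg hc
  d3 _ hg _ hg' := add_mem_posi hg hg'
  d4 g hg hmem := hD.d4 g hg (hD.natExtSet_subset hA hmem)

lemma Coherent.coherentSDG_elpSet {C : Set ((X → ℝ) × Set X)} {lp : (X → ℝ) → Set X → EReal}
    (hlp : Coherent C lp) : CoherentSDG (ElpSet C lp) := by
  obtain ⟨D, hD, hlpD⟩ := hlp
  refine coherentSDG_natExtSet hD ?_
  rintro _ ⟨⟨f, B⟩, hp, m, hm, rfl⟩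
  rw [hlpD _ hp, lpOf, lt_sSup_iff] at hm
  obtain ⟨_, ⟨μ, hμ, rfl⟩, hmμ⟩ := hm
  have hsplit : (fun x => (f x - m) * ind B x) =
      (fun x => (f x - μ) * ind B x) + (μ - m) • ind B := by
    funext x
    simp only [Pi.add_apply, Pi.smul_apply, smul_eq_mul]
    ring
  rw [hsplit]
  exact hD.add_mem_of_mem_cone hμ (hD.mem_cone_of_nonneg ((IsGamble.ind B).const_smul _)
    (smul_nonneg (sub_nonneg.2 (EReal.coe_lt_coe_iff.1 hmμ).le) (ind_nonneg B)))

noncomputable def lowerPrev (D : Set (X → ℝ)) (g : X → ℝ) : ℝ :=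
  sSup {m : ℝ | (fun x => g x - m) ∈ D}

lemma lpOf_univ_eq_of_isLUB {D : Set (X → ℝ)} {g : X → ℝ} {a : ℝ}
    (h : IsLUB {m : ℝ | (fun x => g x - m) ∈ D} a) : lpOf D g Set.univ = a := by
  have hset : {m : ℝ | (fun x => (g x - m) * ind Set.univ x) ∈ D} =
      {m : ℝ | (fun x => g x - m) ∈ D} := by
    simp [ind]
  rw [lpOf, hset, ← h.csSup_eq h.nonempty]
  exact (Monotone.map_csSup_of_continuousAt continuous_coe_real_ereal.continuousAt
    (fun _ _ => EReal.coe_le_coe) h.nonempty h.bddAbove).symm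

namespace CoherentSDG

variable [Nonempty X] {D : Set (X → ℝ)} {g : X → ℝ}

lemma isLUB_lowerPrev (hD : CoherentSDG D) (hg : IsGamble g) :
    IsLUB {m : ℝ | (fun x => g x - m) ∈ D} (lowerPrev D g) := by
  obtain ⟨M, hM⟩ := id hg
  refine isLUB_csSup ⟨-(M + 1), hD.mem_of_pos (hg.sub (.const _)) fun x => ?_⟩
    ⟨M, fun m hm => not_lt.1 fun hMm => hD.d4 _ (fun x => ?_) hm⟩
  · linarith [(abs_le.1 (hM x)).1]
  · show g x - m ≤ 0
    linarith [(abs_le.1 (hM x)).2]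

lemma le_lowerPrev (hD : CoherentSDG D) (hg : IsGamble g) {μ : ℝ}
    (hμ : (fun x => g x - μ) ∈ hD.cone) : μ ≤ lowerPrev D g := by
  refine le_of_forall_pos_le_add fun δ hδ => sub_le_iff_le_add.1 ((hD.isLUB_lowerPrev hg).1 ?_)
  have hsplit : (fun x => g x - (μ - δ)) = (fun _ => δ) + fun x => g x - μ := by
    funext x
    simp only [Pi.add_apply]
    ring
  rw [Set.mem_ofPred_eq, hsplit]
  exact hD.add_mem_of_mem_cone (hD.mem_of_pos (.const δ) fun _ => hδ) hμ

lemma nonneg_of_sub_smul_mem_cone (hD : CoherentSDG D) (hg : IsGamble g) {c t : ℝ}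
    (ht : 0 ≤ t) (h : c • 1 - t • (lowerPrev D g • 1 - g) ∈ hD.cone) : 0 ≤ c := by
  rcases ht.eq_or_lt with rfl | ht
  · exact hD.const_smul_one_nonneg (by simpa using h)
  · have hscaled : (fun x => g x - (lowerPrev D g - c / t)) =
        t⁻¹ • (c • 1 - t • (lowerPrev D g • 1 - g)) := by
      funext x
      simp only [Pi.smul_apply, Pi.sub_apply, Pi.one_apply, smul_eq_mul]
      field_simp
      ring
    have := hD.le_lowerPrev hg (hscaled ▸ hD.cone.smul_mem (inv_nonneg.2 ht.le) h)
    nlinarith [div_mul_cancel₀ c ht.ne']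

theorem exists_linear_le_lowerPrev (hD : CoherentSDG D) (hg : IsGamble g) :
    ∃ P : (X → ℝ) →ₗ[ℝ] ℝ, (∀ f ∈ D, 0 ≤ P f) ∧ P 1 = 1 ∧ P g ≤ lowerPrev D g := by
  let one : gambles X := ⟨1, IsGamble.const 1⟩
  have hone : one ≠ 0 := fun h =>
    one_ne_zero (congrFun (congrArg Subtype.val h) (Classical.arbitrary X))
  -- Riesz extension needs every vector to be pushed into the cone by a multiple of `1`, which
  -- holds on gambles only; the functional obtained there is then extended linearly.
  obtain ⟨P₀, hP₀one, hP₀K⟩ := riesz_extension (hD.gambleConeAdjoin (lowerPrev D g • 1 - g))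
    (LinearPMap.mkSpanSingleton one (1 : ℝ) hone)
    (by
      rintro ⟨_, hx⟩ ⟨t, ht, hxK⟩
      obtain ⟨c, rfl⟩ := Submodule.mem_span_singleton.1 hx
      rw [LinearPMap.mkSpanSingleton'_apply, smul_eq_mul, mul_one]
      exact hD.nonneg_of_sub_smul_mem_cone hg ht hxK)
    (by
      rintro ⟨y, M, hM⟩
      refine ⟨⟨M • one, Submodule.smul_mem _ _ (Submodule.mem_span_singleton_self one)⟩,
        0, le_rfl, ?_⟩
      rw [zero_smul, sub_zero]
      refine hD.mem_cone_of_nonneg (((IsGamble.const 1).const_smul M).add ⟨M, hM⟩) fun x => ?_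
      simpa [one, ← sub_nonneg, sub_neg_eq_add, add_comm] using (abs_le.1 (hM x)).1)
  obtain ⟨P, hP⟩ := LinearMap.exists_extend P₀
  have hPP₀ (v : gambles X) : P v = P₀ v := LinearMap.congr_fun hP v
  have hP1 : P 1 = 1 := by
    rw [hPP₀ one, hP₀one ⟨one, Submodule.mem_span_singleton_self one⟩]
    exact LinearPMap.mkSpanSingleton'_apply_self _ _ _ _
  refine ⟨P, fun f hf => ?_, hP1, ?_⟩
  · rw [hPP₀ ⟨f, hD.subset_gambles f hf⟩]
    exact hP₀K _ ⟨0, le_rfl, by simpa using hD.subset_cone hf⟩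
  · have hw := hP₀K ⟨lowerPrev D g • 1 - g, ((IsGamble.const 1).const_smul _).sub hg⟩
      ⟨1, zero_le_one, by simp⟩
    rw [← hPP₀] at hw
    simp only [map_sub, map_smul, hP1, smul_eq_mul, mul_one, sub_nonneg] at hw
    exact hw

end CoherentSDG

section IndependentProduct

variable {X1 X2 : Type*} {E1 : Set (X1 → ℝ)} {E2 : Set (X2 → ℝ)}

def applySnd (P : (X2 → ℝ) →ₗ[ℝ] ℝ) : (X1 × X2 → ℝ) →ₗ[ℝ] (X1 → ℝ) :=
  LinearMap.pi fun x1 => P ∘ₗ LinearMap.funLeft ℝ ℝ (Prod.mk x1)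

lemma applySnd_apply (P : (X2 → ℝ) →ₗ[ℝ] ℝ) (g : X1 × X2 → ℝ) (x1 : X1) :
    applySnd P g x1 = P fun x2 => g (x1, x2) := rfl

lemma applySnd_mem_cone_of_mem_indNatExt (hE1 : CoherentSDG E1) (hE2 : CoherentSDG E2)
    {F1 : Set (Set X1)} {F2 : Set (Set X2)} {P : (X2 → ℝ) →ₗ[ℝ] ℝ}
    (hP : ∀ f ∈ E2, 0 ≤ P f) (hP1 : P 1 = 1) {g : X1 × X2 → ℝ}
    (hg : g ∈ indNatExt E1 E2 F1 F2) : applySnd P g ∈ hE1.cone := by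
  refine posi_subset (S := {g | applySnd P g ∈ hE1.cone}) ?_
    (fun g hg c hc => by simpa using hE1.cone.smul_mem hc.le hg)
    (fun g hg g' hg' => by simpa using hE1.cone.add_mem hg hg') hg
  rintro _ ((⟨f2, hf2, B1, -, rfl⟩ | ⟨f1, hf1, B2, -, rfl⟩) | ⟨hgG, hg0, -⟩)
  · have heq : applySnd P (fun p : X1 × X2 => f2 p.2 * ind B1 p.1) = P f2 • ind B1 := by
      funext x1
      simp only [applySnd_apply, Pi.smul_apply, smul_eq_mul]
      rw [show (fun x2 => f2 x2 * ind B1 x1) = ind B1 x1 • f2 by funext; simp [mul_comm],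
        map_smul, smul_eq_mul, mul_comm]
    rw [Set.mem_ofPred_eq, heq]
    exact hE1.mem_cone_of_nonneg ((IsGamble.ind B1).const_smul _)
      (smul_nonneg (hP f2 hf2) (ind_nonneg B1))
  · have heq : applySnd P (fun p : X1 × X2 => f1 p.1 * ind B2 p.2) = P (ind B2) • f1 := by
      funext x1
      simp only [applySnd_apply, Pi.smul_apply, smul_eq_mul]
      rw [show (fun x2 => f1 x1 * ind B2 x2) = f1 x1 • ind B2 from rfl, map_smul, smul_eq_mul,
        mul_comm]
    rw [Set.mem_ofPred_eq, heq]
    exact hE1.cone.smul_mem (hE2.apply_nonneg_of_mem_cone hP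
      (hE2.mem_cone_of_nonneg (IsGamble.ind B2) (ind_nonneg B2))) (hE1.subset_cone hf1)
  · obtain ⟨M, hM⟩ := hgG
    refine hE1.mem_cone_of_nonneg ⟨M, fun x1 => hE2.abs_apply_le hP hP1 fun x2 => hM _⟩
      fun x1 => hE2.apply_nonneg_of_mem_cone hP (hE2.mem_cone_of_nonneg ?_ fun x2 => hg0 _)
    exact ⟨M, fun x2 => hM _⟩

lemma add_sub_mem_indNatExt (F1 : Set (Set X1)) (F2 : Set (Set X2)) {f : X1 → ℝ} {h : X2 → ℝ}
    {m1 m2 : ℝ} (hf : (fun x => f x - m1) ∈ E1) (hh : (fun x => h x - m2) ∈ E2) :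
    (fun p : X1 × X2 => f p.1 + h p.2 - (m1 + m2)) ∈ indNatExt E1 E2 F1 F2 := by
  have hsplit : (fun p : X1 × X2 => f p.1 + h p.2 - (m1 + m2)) =
      (fun p => (h p.2 - m2) * ind Set.univ p.1) + fun p => (f p.1 - m1) * ind Set.univ p.2 := by
    funext p
    simp only [ind, Set.indicator_univ, Pi.one_apply, mul_one, Pi.add_apply]
    ring
  rw [hsplit]
  exact add_mem_posi (subset_posi _ (.inl (.inl ⟨_, hh, Set.univ, .inr rfl, rfl⟩)))
    (subset_posi _ (.inl (.inr ⟨_, hf, Set.univ, .inr rfl, rfl⟩)))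

theorem isLUB_indNatExt_add [Nonempty X1] [Nonempty X2] (hE1 : CoherentSDG E1)
    (hE2 : CoherentSDG E2) (F1 : Set (Set X1)) (F2 : Set (Set X2)) {f : X1 → ℝ} {h : X2 → ℝ}
    (hf : IsGamble f) (hh : IsGamble h) :
    IsLUB {m : ℝ | (fun p : X1 × X2 => f p.1 + h p.2 - m) ∈ indNatExt E1 E2 F1 F2}
      (lowerPrev E1 f + lowerPrev E2 h) := by
  refine ⟨fun m hm => ?_, fun b hb => ?_⟩
  · obtain ⟨P, hP, hP1, hPh⟩ := hE2.exists_linear_le_lowerPrev hh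
    have hslice (x1 : X1) : (fun x2 => f x1 + h x2 - m) = (f x1 - m) • 1 + h := by
      funext x2
      simp only [Pi.add_apply, Pi.smul_apply, Pi.one_apply, smul_eq_mul]
      ring
    have hmarg : applySnd P (fun p : X1 × X2 => f p.1 + h p.2 - m) =
        fun x1 => f x1 - (m - P h) := by
      funext x1
      rw [applySnd_apply, hslice, map_add, map_smul, hP1, smul_eq_mul, mul_one]
      ring
    have := hE1.le_lowerPrev hf
      (hmarg ▸ applySnd_mem_cone_of_mem_indNatExt hE1 hE2 hP hP1 hm)
    linarith
  · have hub1 : lowerPrev E1 f ≤ b - lowerPrev E2 h := (hE1.isLUB_lowerPrev hf).2 fun m1 hm1 =>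
      le_sub_comm.1 ((hE2.isLUB_lowerPrev hh).2 fun m2 hm2 =>
        le_sub_iff_add_le'.2 (hb (add_sub_mem_indNatExt F1 F2 hm1 hm2)))
    linarith

end IndependentProduct

theorem stmt16_general {X1 X2 : Type*} [Nonempty X1] [Nonempty X2]
    (C1 : Set ((X1 → ℝ) × Set X1))
    (lp1 : (X1 → ℝ) → Set X1 → EReal) (hlp1 : Coherent C1 lp1)
    (C2 : Set ((X2 → ℝ) × Set X2))
    (lp2 : (X2 → ℝ) → Set X2 → EReal) (hlp2 : Coherent C2 lp2)
    (F1 : Set (Set X1)) (F2 : Set (Set X2))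
    (f : X1 → ℝ) (h : X2 → ℝ) (hf : IsGamble f) (hh : IsGamble h) :
    lpProd C1 lp1 C2 lp2 F1 F2 (fun p => f p.1 + h p.2) Set.univ =
      natExtLP C1 lp1 f Set.univ + natExtLP C2 lp2 h Set.univ := by
  have hE1 := hlp1.coherentSDG_elpSet
  have hE2 := hlp2.coherentSDG_elpSet
  rw [lpProd, natExtLP, natExtLP, lpOf_univ_eq_of_isLUB (isLUB_indNatExt_add hE1 hE2 F1 F2 hf hh),
    lpOf_univ_eq_of_isLUB (hE1.isLUB_lowerPrev hf), lpOf_univ_eq_of_isLUB (hE2.isLUB_lowerPrev hh),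
    EReal.coe_add]

/-- Corollary 7, External additivity. -/
theorem stmt16 {X1 X2 : Type*} [Nonempty X1] [Nonempty X2]
    (C1 : Set ((X1 → ℝ) × Set X1)) (hC1 : C1 ⊆ domC X1)
    (lp1 : (X1 → ℝ) → Set X1 → EReal) (hlp1 : Coherent C1 lp1)
    (C2 : Set ((X2 → ℝ) × Set X2)) (hC2 : C2 ⊆ domC X2)
    (lp2 : (X2 → ℝ) → Set X2 → EReal) (hlp2 : Coherent C2 lp2)
    (F1 : Set (Set X1)) (F2 : Set (Set X2))
    (hF1 : ∀ A ∈ F1, A.Nonempty) (hF2 : ∀ A ∈ F2, A.Nonempty)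
    (f : X1 → ℝ) (h : X2 → ℝ) (hf : IsGamble f) (hh : IsGamble h) :
    lpProd C1 lp1 C2 lp2 F1 F2 (fun p => f p.1 + h p.2) Set.univ =
      natExtLP C1 lp1 f Set.univ + natExtLP C2 lp2 h Set.univ :=
  stmt16_general C1 lp1 hlp1 C2 lp2 hlp2 F1 F2 f h hf hh

end IPaper
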